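/- Let α ∈ (0,1] and let V ∈ C²(ℝ) be such that e^{−V} ∈ L¹(ℝ; dx) ∩ C_b²(ℝ). Suppose that limsup_{|x|→∞} |x|³ e^{−V(x)} |V'(x)² − V''(x)| < ∞. Then there exists a constant c > 0 such that for all x ∈ ℝ and all ε ∈ (0,1]: | ∫_{{y : |y−x| ≥ ε}} (e^{−V(y)} − e^{−V(x)}) |y−x|^{−(1+α)} dy | ≤ c ( (1+|x|)^{−(1+α)} + e^{−V(x)} ). -/

import Mathlib

/-!
Write `f = e^{-V}`. Substituting `y = x ± z` turns the truncated integral into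
`∫_{z ≥ ε} (f(x+z) + f(x-z) - 2 f(x)) z^{-(1+α)} dz`. For `z ≤ N` the second difference is
`O(K z²)` with `K = sup_{[x-N, x+N]} |f''|`, which contributes `O(K N^{2-α})`; for `z > N` it is
bounded by `f(x+z) + f(x-z) + 2 f(x)`, which contributes `O(N^{-(1+α)} ‖f‖₁ + f(x) / α)`.
Take `N = 1` for bounded `|x|`, where `f''` is bounded, and `N = |x|/2` for large `|x|`, where the
decay hypothesis gives `K = O(N^{-3})`; in both cases the bound is `O(N^{-(1+α)} + f(x))` and
`N^{-(1+α)} = O((1+|x|)^{-(1+α)})`.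
-/

open MeasureTheory Real Filter

/-- The constant `c_{1,α} = 2^α Γ((1+α)/2)/(π^{1/2} |Γ(-α/2)|)`. -/
noncomputable def fracC (α : ℝ) : ℝ :=
  2 ^ α * Real.Gamma ((1 + α) / 2) / (Real.pi ^ ((1 : ℝ) / 2) * |Real.Gamma (-α / 2)|)

/-- The one-dimensional fractional Laplacian `(-Δ)^{α/2} g`, defined so that
`-(-Δ)^{α/2} g (x) = c_{1,α} ∫ (g(x+z) - g(x) - g'(x) z 1_{|z|≤1}) |z|^{-(1+α)} dz`. -/
noncomputable def fracLap1 (α : ℝ) (g : ℝ → ℝ) (x : ℝ) : ℝ :=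
  -(fracC α *
    ∫ z : ℝ, (g (x + z) - g x - deriv g x * z * (if |z| ≤ 1 then 1 else 0)) * |z| ^ (-(1 + α)))

/-- The one-dimensional fractional drift
`b(x) = -e^{V(x)} ∫_{-∞}^x (-Δ)^{α/2} e^{-V(u)} du`. -/
noncomputable def fracDrift1 (α : ℝ) (V : ℝ → ℝ) (x : ℝ) : ℝ :=
  -Real.exp (V x) * ∫ u in Set.Iic x, fracLap1 α (fun y => Real.exp (-(V y))) u

open Set

lemma abs_add_add_sub_two_mul_le {f : ℝ → ℝ} (hf : ContDiff ℝ 2 f) {x z K : ℝ} (hz : 0 ≤ z)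
    (hK : ∀ u ∈ Icc (x - z) (x + z), |deriv (deriv f) u| ≤ K) :
    |f (x + z) + f (x - z) - 2 * f x| ≤ 2 * K * z ^ 2 := by
  obtain ⟨hf₁, -, hf₂⟩ := (contDiff_succ_iff_deriv (n := 1)).mp hf
  have hderiv : ∀ y, HasDerivAt f (deriv f y) y := fun y => (hf₁ y).hasDerivAt
  have hderiv₂ : ∀ y, HasDerivAt (deriv f) (deriv (deriv f) y) y :=
    fun y => (hf₂.differentiable one_ne_zero y).hasDerivAt
  have hK0 : 0 ≤ K := (abs_nonneg _).trans (hK x ⟨by linarith, by linarith⟩)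
  have hslope : ∀ t ∈ Icc 0 z, ‖deriv f (x + t) - deriv f (x - t)‖ ≤ 2 * K * z := by
    rintro t ⟨ht0, htz⟩
    have h := (convex_Icc (x - z) (x + z)).norm_image_sub_le_of_norm_hasDerivWithin_le
      (fun u _ => (hderiv₂ u).hasDerivWithinAt) hK
      (x := x - t) (y := x + t) ⟨by linarith, by linarith⟩ ⟨by linarith, by linarith⟩
    rw [show x + t - (x - t) = 2 * t by ring, Real.norm_eq_abs (2 * t),
      abs_of_nonneg (by linarith)] at h
    nlinarith
  have hφ : ∀ t, HasDerivAt (fun t => f (x + t) + f (x - t) - 2 * f x)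
      (deriv f (x + t) - deriv f (x - t)) t := by
    intro t
    have h_add := (hderiv (x + t)).comp t ((hasDerivAt_id t).const_add x)
    have h_sub := (hderiv (x - t)).comp t ((hasDerivAt_id t).const_sub x)
    simpa [sub_eq_add_neg] using (h_add.add h_sub).sub_const (2 * f x)
  have h := (convex_Icc 0 z).norm_image_sub_le_of_norm_hasDerivWithin_le
    (fun t _ => (hφ t).hasDerivWithinAt) hslope ⟨le_rfl, hz⟩ ⟨hz, le_rfl⟩
  simp only [add_zero, sub_zero, Real.norm_eq_abs, abs_of_nonneg hz,
    show f x + f x - 2 * f x = 0 by ring] at h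
  rwa [sq, ← mul_assoc]

lemma abs_setIntegral_Icc_le_of_abs_le_rpow {g : ℝ → ℝ} {a N C β : ℝ} (ha : 0 < a)
    (haN : a ≤ N) (hβ : -1 < β) (hg : ∀ z ∈ Icc a N, |g z| ≤ C * z ^ β) :
    |∫ z in Icc a N, g z| ≤ C * N ^ (β + 1) / (β + 1) := by
  have hC : 0 ≤ C := nonneg_of_mul_nonneg_left ((abs_nonneg _).trans (hg a ⟨le_rfl, haN⟩))
    (Real.rpow_pos_of_pos ha β)
  have hint : IntegrableOn (fun z => C * z ^ β) (Icc a N) :=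
    (continuousOn_const.mul (continuousOn_id.rpow_const
      fun z hz => Or.inl (ha.trans_le hz.1).ne')).integrableOn_Icc
  calc |∫ z in Icc a N, g z|
      ≤ ∫ z in Icc a N, C * z ^ β :=
        (Real.norm_eq_abs _).symm.trans_le <| norm_integral_le_of_norm_le hint ((ae_restrict_iff' measurableSet_Icc).mpr
          (Eventually.of_forall hg))
    _ = C * (N ^ (β + 1) - a ^ (β + 1)) / (β + 1) := by
        rw [integral_Icc_eq_integral_Ioc, ← intervalIntegral.integral_of_le haN,
          intervalIntegral.integral_const_mul, integral_rpow (Or.inl hβ), mul_div_assoc]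
    _ ≤ C * N ^ (β + 1) / (β + 1) := by
        gcongr
        · linarith
        · exact sub_le_self _ (Real.rpow_nonneg ha.le _)

lemma integral_Ioi_rpow_neg_one_sub {α N : ℝ} (hα : 0 < α) (hN : 0 < N) :
    ∫ z in Ioi N, z ^ (-(1 + α)) = N ^ (-α) / α := by
  rw [integral_Ioi_rpow_of_lt (by linarith) hN, show -(1 + α) + 1 = -α by ring, neg_div_neg_eq]

lemma abs_setIntegral_Ioi_le {f : ℝ → ℝ} (hf : Integrable f) (x : ℝ) {α N : ℝ} (hα : 0 < α)
    (hN : 0 < N) :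
    |∫ z in Ioi N, (f (x + z) + f (x - z) - 2 * f x) * z ^ (-(1 + α))| ≤
      2 * N ^ (-(1 + α)) * (∫ y, |f y|) + 2 * |f x| * N ^ (-α) / α := by
  have hshift : Integrable fun z => |f (x + z)| + |f (x - z)| :=
    (hf.abs.comp_add_left x).add (hf.abs.comp_sub_left x)
  have hweight : IntegrableOn (fun z : ℝ => z ^ (-(1 + α))) (Ioi N) :=
    integrableOn_Ioi_rpow_of_lt (by linarith) hN
  have hbound : ∀ z ∈ Ioi N, ‖(f (x + z) + f (x - z) - 2 * f x) * z ^ (-(1 + α))‖ ≤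
      N ^ (-(1 + α)) * (|f (x + z)| + |f (x - z)|) + 2 * |f x| * z ^ (-(1 + α)) := by
    intro z hz
    have hz0 : 0 < z := hN.trans hz
    have hw : z ^ (-(1 + α)) ≤ N ^ (-(1 + α)) :=
      Real.rpow_le_rpow_of_nonpos hN (le_of_lt hz) (by linarith)
    have hw0 : 0 ≤ z ^ (-(1 + α)) := Real.rpow_nonneg hz0.le _
    rw [Real.norm_eq_abs, abs_mul, abs_of_nonneg hw0]
    have hD : |f (x + z) + f (x - z) - 2 * f x| ≤ |f (x + z)| + |f (x - z)| + 2 * |f x| := by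
      have := abs_sub (f (x + z) + f (x - z)) (2 * f x)
      rw [abs_mul, abs_two] at this
      linarith [abs_add_le (f (x + z)) (f (x - z))]
    nlinarith [abs_nonneg (f (x + z)), abs_nonneg (f (x - z)), abs_nonneg (f x)]
  have hshift_le : ∫ z in Ioi N, (|f (x + z)| + |f (x - z)|) ≤ 2 * ∫ y, |f y| := by
    calc ∫ z in Ioi N, (|f (x + z)| + |f (x - z)|)
        ≤ ∫ z, (|f (x + z)| + |f (x - z)|) :=
          setIntegral_le_integral hshift (Eventually.of_forall fun z => by positivity)
      _ = 2 * ∫ y, |f y| := by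
          rw [integral_add (hf.abs.comp_add_left x) (hf.abs.comp_sub_left x),
            integral_add_left_eq_self (fun y => |f y|) x,
            integral_sub_left_eq_self (fun y => |f y|) volume x]
          ring
  calc _ ≤ ∫ z in Ioi N,
        (N ^ (-(1 + α)) * (|f (x + z)| + |f (x - z)|) + 2 * |f x| * z ^ (-(1 + α))) :=
        norm_integral_le_of_norm_le ((hshift.integrableOn.const_mul _).add (hweight.const_mul _))
          ((ae_restrict_iff' measurableSet_Ioi).mpr (Eventually.of_forall hbound))
    _ = N ^ (-(1 + α)) * (∫ z in Ioi N, (|f (x + z)| + |f (x - z)|)) +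
        2 * |f x| * (N ^ (-α) / α) := by
        rw [integral_add (hshift.integrableOn.const_mul _) (hweight.const_mul _),
          integral_const_mul, integral_const_mul, integral_Ioi_rpow_neg_one_sub hα hN]
    _ ≤ _ := by
        have := mul_le_mul_of_nonneg_left hshift_le (Real.rpow_nonneg hN.le (-(1 + α)))
        linarith [mul_div_assoc (2 * |f x|) (N ^ (-α)) α]

lemma setIntegral_abs_sub_ge_eq_setIntegral_Ici (F : ℝ → ℝ) (x : ℝ) {ε : ℝ} (hε : 0 < ε)
    (h_add : IntegrableOn (fun z => F (x + z)) (Ici ε))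
    (h_sub : IntegrableOn (fun z => F (x - z)) (Ici ε)) :
    ∫ y in {y | ε ≤ |y - x|}, F y = ∫ z in Ici ε, (F (x + z) + F (x - z)) := by
  have hpre_add : (fun z => x + z) ⁻¹' Ici (x + ε) = Ici ε := by ext; simp
  have hpre_sub : (fun z => x - z) ⁻¹' Iic (x - ε) = Ici ε := by ext; simp
  have mp_add := measurePreserving_add_left volume x
  have mp_sub := Measure.measurePreserving_sub_left volume x
  have me_add := measurableEmbedding_addLeft x
  have me_sub := measurableEmbedding_subLeft x
  have hsplit : {y | ε ≤ |y - x|} = Iic (x - ε) ∪ Ici (x + ε) := by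
    ext y
    simp only [mem_ofPred_eq, mem_union, mem_Iic, mem_Ici, le_abs]
    constructor <;> rintro (h | h) <;> [right; left; right; left] <;> linarith
  have hdisj : Disjoint (Iic (x - ε)) (Ici (x + ε)) :=
    Iic_disjoint_Ici.mpr (by linarith)
  rw [hsplit, setIntegral_union hdisj measurableSet_Ici
      ((mp_sub.integrableOn_comp_preimage me_sub).mp (hpre_sub ▸ h_sub))
      ((mp_add.integrableOn_comp_preimage me_add).mp (hpre_add ▸ h_add)),
    integral_add h_add h_sub, ← mp_add.setIntegral_preimage_emb me_add F (Ici (x + ε)),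
    ← mp_sub.setIntegral_preimage_emb me_sub F (Iic (x - ε)), hpre_add, hpre_sub, add_comm]

lemma integrableOn_Ici_sub_mul_abs_rpow {g : ℝ → ℝ} (hg : Integrable g) (c : ℝ) {α ε : ℝ}
    (hα : 0 < α) (hε : 0 < ε) :
    IntegrableOn (fun z => (g z - c) * |z| ^ (-(1 + α))) (Ici ε) := by
  have hweight : IntegrableOn (fun z : ℝ => |z| ^ (-(1 + α))) (Ici ε) := by
    rw [integrableOn_Ici_iff_integrableOn_Ioi]
    exact (integrableOn_Ioi_rpow_of_lt (a := -(1 + α)) (by linarith) hε).congr_fun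
      (fun z hz => by rw [abs_of_pos (hε.trans hz)]) measurableSet_Ioi
  have hgw : IntegrableOn (fun z => |z| ^ (-(1 + α)) * g z) (Ici ε) := by
    refine hg.integrableOn.bdd_mul (c := ε ^ (-(1 + α)))
      (measurable_abs.pow_const _).aestronglyMeasurable ((ae_restrict_iff' measurableSet_Ici).mpr (Eventually.of_forall ?_))
    intro z hz
    rw [Real.norm_eq_abs, abs_of_nonneg (Real.rpow_nonneg (abs_nonneg z) _)]
    exact Real.rpow_le_rpow_of_nonpos hε (hz.trans (le_abs_self z)) (by linarith)
  exact (hgw.sub (hweight.const_mul c)).congr_fun (fun z _ => by simp only [Pi.sub_apply]; ring) measurableSet_Ici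

theorem abs_setIntegral_sub_mul_abs_rpow_le {f : ℝ → ℝ} (hf : ContDiff ℝ 2 f)
    (hfi : Integrable f) (x : ℝ) {α ε N K : ℝ} (hα : 0 < α) (hα2 : α < 2) (hε : 0 < ε)
    (hεN : ε ≤ N) (hK : ∀ u ∈ Icc (x - N) (x + N), |deriv (deriv f) u| ≤ K) :
    |∫ y in {y | ε ≤ |y - x|}, (f y - f x) * |y - x| ^ (-(1 + α))| ≤
      2 * N ^ (-(1 + α)) * (∫ y, |f y|) + 2 * |f x| * N ^ (-α) / α +
        2 * K * N ^ (2 - α) / (2 - α) := by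
  set D : ℝ → ℝ := fun z => f (x + z) + f (x - z) - 2 * f x
  have h_add : IntegrableOn (fun z => (f (x + z) - f x) * |x + z - x| ^ (-(1 + α))) (Ici ε) := by
    simpa only [add_sub_cancel_left] using
      integrableOn_Ici_sub_mul_abs_rpow (hfi.comp_add_left x) (f x) hα hε
  have h_sub : IntegrableOn (fun z => (f (x - z) - f x) * |x - z - x| ^ (-(1 + α))) (Ici ε) := by
    simpa only [sub_sub_cancel_left, abs_neg] using
      integrableOn_Ici_sub_mul_abs_rpow (hfi.comp_sub_left x) (f x) hα hε
  have hsymm : EqOn (fun z => (f (x + z) - f x) * |x + z - x| ^ (-(1 + α)) +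
      (f (x - z) - f x) * |x - z - x| ^ (-(1 + α))) (fun z => D z * z ^ (-(1 + α))) (Ici ε) := by
    intro z hz
    simp only [D, add_sub_cancel_left, sub_sub_cancel_left, abs_neg,
      abs_of_nonneg (hε.le.trans hz)]
    ring
  have hDi : IntegrableOn (fun z => D z * z ^ (-(1 + α))) (Ici ε) :=
    (h_add.add h_sub).congr_fun hsymm measurableSet_Ici
  have hdisj : Disjoint (Icc ε N) (Ioi N) := disjoint_left.mpr fun _ hz hz' => not_lt.mpr hz.2 hz'
  rw [setIntegral_abs_sub_ge_eq_setIntegral_Ici _ x hε h_add h_sub,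
    setIntegral_congr_fun measurableSet_Ici hsymm, ← Icc_union_Ioi_eq_Ici hεN,
    setIntegral_union hdisj measurableSet_Ioi (hDi.mono_set Icc_subset_Ici_self)
      (hDi.mono_set (Ioi_subset_Ici hεN))]
  have hnear : |∫ z in Icc ε N, D z * z ^ (-(1 + α))| ≤ 2 * K * N ^ (2 - α) / (2 - α) := by
    have h := abs_setIntegral_Icc_le_of_abs_le_rpow (g := fun z => D z * z ^ (-(1 + α))) (C := 2 * K) (β := 1 - α) hε hεN
      (by linarith) fun z hz => by
        have hz0 : 0 < z := hε.trans_le hz.1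
        rw [abs_mul, abs_of_pos (Real.rpow_pos_of_pos hz0 _)]
        calc |D z| * z ^ (-(1 + α)) ≤ 2 * K * z ^ 2 * z ^ (-(1 + α)) := by
              gcongr
              exact abs_add_add_sub_two_mul_le hf hz0.le fun u hu =>
                hK u ⟨by linarith [hu.1, hz.2], by linarith [hu.2, hz.2]⟩
          _ = 2 * K * z ^ (1 - α) := by
              rw [mul_assoc, ← Real.rpow_natCast, ← Real.rpow_add hz0,
                show ((2 : ℕ) : ℝ) + -(1 + α) = 1 - α by push_cast; ring]
    rwa [show 1 - α + 1 = 2 - α by ring] at h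
  have hfar := abs_setIntegral_Ioi_le hfi x hα (hε.trans_le hεN)
  calc _ ≤ |∫ z in Icc ε N, D z * z ^ (-(1 + α))| + |∫ z in Ioi N, D z * z ^ (-(1 + α))| :=
        abs_add_le _ _
    _ ≤ _ := by linarith

lemma abs_setIntegral_sub_mul_abs_rpow_le_of_scale {f : ℝ → ℝ} (hf : ContDiff ℝ 2 f)
    (hfi : Integrable f) (x : ℝ) {α ε N K : ℝ} (hα : 0 < α) (hα2 : α < 2) (hε : 0 < ε)
    (hεN : ε ≤ N) (hN : 1 ≤ N) (hK : ∀ u ∈ Icc (x - N) (x + N), |deriv (deriv f) u| ≤ K / N ^ 3) :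
    |∫ y in {y | ε ≤ |y - x|}, (f y - f x) * |y - x| ^ (-(1 + α))| ≤
      N ^ (-(1 + α)) * (2 * (∫ y, |f y|) + 2 * K / (2 - α)) + 2 / α * |f x| := by
  have hN0 : 0 < N := one_pos.trans_le hN
  have hscale : K / N ^ 3 * N ^ (2 - α) = K * N ^ (-(1 + α)) := by
    rw [div_mul_eq_mul_div, mul_div_assoc, ← Real.rpow_natCast, ← Real.rpow_sub hN0,
      show 2 - α - ((3 : ℕ) : ℝ) = -(1 + α) by push_cast; ring]
  have hNα : N ^ (-α) ≤ 1 := Real.rpow_le_one_of_one_le_of_nonpos hN (by linarith)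
  have hfx : 2 * |f x| * N ^ (-α) / α ≤ 2 / α * |f x| := by
    calc _ ≤ 2 * |f x| * 1 / α := by gcongr
      _ = _ := by ring
  calc _ ≤ 2 * N ^ (-(1 + α)) * (∫ y, |f y|) + 2 * |f x| * N ^ (-α) / α +
        2 * (K / N ^ 3) * N ^ (2 - α) / (2 - α) :=
        abs_setIntegral_sub_mul_abs_rpow_le hf hfi x hα hα2 hε hεN hK
    _ = N ^ (-(1 + α)) * (2 * (∫ y, |f y|) + 2 * K / (2 - α)) + 2 * |f x| * N ^ (-α) / α := by
        linear_combination (2 / (2 - α)) * hscale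
    _ ≤ _ := by linarith

lemma exists_scale_abs_le_div_pow_three {g : ℝ → ℝ} {M M₁ R : ℝ} (hR : 1 ≤ R)
    (hM : ∀ u, |g u| ≤ M) (htail : ∀ u, R ≤ |u| → |u| ^ 3 * |g u| ≤ M₁) (x : ℝ) :
    ∃ N, 1 ≤ N ∧ 1 + |x| ≤ (3 + 2 * R) * N ∧
      ∀ u ∈ Icc (x - N) (x + N), |g u| ≤ max M M₁ / N ^ 3 := by
  rcases le_or_gt |x| (2 * R) with hx | hx
  · exact ⟨1, le_rfl, by linarith, fun u _ => by
      simpa using (hM u).trans (le_max_left M M₁)⟩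
  · refine ⟨|x| / 2, by linarith, by nlinarith, fun u hu => ?_⟩
    have hu : |x| / 2 ≤ |u| := by
      have := abs_sub_abs_le_abs_sub x u
      have : |x - u| ≤ |x| / 2 := abs_sub_le_iff.mpr ⟨by linarith [hu.1], by linarith [hu.2]⟩
      linarith
    have hN3 : 0 < (|x| / 2) ^ 3 := pow_pos (by linarith) 3
    rw [le_div_iff₀ hN3]
    calc |g u| * (|x| / 2) ^ 3 ≤ |g u| * |u| ^ 3 := by gcongr
      _ ≤ M₁ := by linarith [htail u (by linarith)]
      _ ≤ max M M₁ := le_max_right M M₁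

lemma rpow_neg_le_sq_mul_rpow_neg {s t L p : ℝ} (ht : 0 < t) (hL : 1 ≤ L) (hts : t ≤ L * s)
    (hp : 0 ≤ p) (hp2 : p ≤ 2) : s ^ (-p) ≤ L ^ 2 * t ^ (-p) := by
  have hL0 : 0 < L := one_pos.trans_le hL
  calc s ^ (-p) ≤ (t / L) ^ (-p) :=
        Real.rpow_le_rpow_of_nonpos (by positivity) (by rwa [div_le_iff₀' hL0]) (by linarith)
    _ = L ^ p * t ^ (-p) := by
        rw [Real.div_rpow ht.le hL0.le, Real.rpow_neg hL0.le, div_inv_eq_mul, mul_comm]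
    _ ≤ L ^ 2 * t ^ (-p) := by
        gcongr
        exact_mod_cast Real.rpow_le_rpow_of_exponent_le hL hp2

lemma deriv_deriv_exp_neg {V : ℝ → ℝ} (hV : ContDiff ℝ 2 V) (y : ℝ) :
    deriv (deriv fun y => rexp (-V y)) y = (deriv V y ^ 2 - deriv (deriv V) y) * rexp (-V y) := by
  obtain ⟨hV₁, -, hV₂⟩ := (contDiff_succ_iff_deriv (n := 1)).mp hV
  have hderiv : deriv (fun y => rexp (-V y)) = fun y => rexp (-V y) * -deriv V y :=
    funext fun y => ((hV₁ y).hasDerivAt.neg.exp).deriv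
  rw [hderiv]
  refine (((hV₁ y).hasDerivAt.neg.exp).mul
    (hV₂.differentiable one_ne_zero y).hasDerivAt.neg).deriv.trans ?_
  simp only [Pi.neg_apply]
  ring

theorem stmt_11 (α : ℝ) (hα : α ∈ Set.Ioc (0 : ℝ) 1)
    (V : ℝ → ℝ) (hV : ContDiff ℝ 2 V)
    (hL1 : Integrable (fun x => Real.exp (-(V x))))
    (hCb2 : ∃ M : ℝ, ∀ x : ℝ, Real.exp (-(V x)) ≤ M ∧
      |deriv (fun y => Real.exp (-(V y))) x| ≤ M ∧
      |deriv (deriv (fun y => Real.exp (-(V y)))) x| ≤ M)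
    (hlim : ∃ M R : ℝ, ∀ x : ℝ, R ≤ |x| →
      |x| ^ 3 * Real.exp (-(V x)) * |(deriv V x) ^ 2 - deriv (deriv V) x| ≤ M) :
    ∃ c : ℝ, 0 < c ∧ ∀ x : ℝ, ∀ ε ∈ Set.Ioc (0 : ℝ) 1,
      |∫ y in {y : ℝ | ε ≤ |y - x|},
          (Real.exp (-(V y)) - Real.exp (-(V x))) * |y - x| ^ (-(1 + α))| ≤
        c * ((1 + |x|) ^ (-(1 + α)) + Real.exp (-(V x))) := by
  obtain ⟨hα0, hα1⟩ := hα
  obtain ⟨M, hM⟩ := hCb2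
  obtain ⟨M₁, R, hMR⟩ := hlim
  have hf : ContDiff ℝ 2 fun y => rexp (-V y) := Real.contDiff_exp.comp hV.neg
  have htail : ∀ u, max R 1 ≤ |u| → |u| ^ 3 * |deriv (deriv fun y => rexp (-V y)) u| ≤ M₁ := by
    intro u hu
    rw [deriv_deriv_exp_neg hV, abs_mul, abs_of_pos (exp_pos _)]
    convert hMR u ((le_max_left R 1).trans hu) using 1
    ring
  set L := 3 + 2 * max R 1
  set B := 2 * (∫ y, |rexp (-V y)|) + 2 * max M M₁ / (2 - α)
  have hB : 0 ≤ B := by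
    have : 0 ≤ max M M₁ := (abs_nonneg _).trans ((hM 0).2.2.trans (le_max_left M M₁))
    have : 0 < 2 - α := by linarith
    positivity
  refine ⟨L ^ 2 * B + 2 / α, add_pos_of_nonneg_of_pos (mul_nonneg (sq_nonneg L) hB) (by positivity), fun x ε ⟨hε, hε1⟩ => ?_⟩
  obtain ⟨N, hN, hxN, hK⟩ := exists_scale_abs_le_div_pow_three (le_max_right R 1)
    (fun u => (hM u).2.2) htail x
  have hNx : N ^ (-(1 + α)) ≤ L ^ 2 * (1 + |x|) ^ (-(1 + α)) :=
    rpow_neg_le_sq_mul_rpow_neg (by positivity) (by linarith [le_max_right R 1]) hxN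
      (by linarith) (by linarith)
  have hT : 0 ≤ (1 + |x|) ^ (-(1 + α)) := by positivity
  have hfx : 0 < rexp (-V x) := exp_pos _
  calc _ ≤ N ^ (-(1 + α)) * B + 2 / α * |rexp (-V x)| :=
        abs_setIntegral_sub_mul_abs_rpow_le_of_scale hf hL1 x hα0 (by linarith) hε
          (hε1.trans hN) hN hK
    _ ≤ L ^ 2 * (1 + |x|) ^ (-(1 + α)) * B + 2 / α * rexp (-V x) := by
        rw [abs_of_pos hfx]; gcongr
    _ ≤ _ := by nlinarith [mul_nonneg (mul_nonneg (sq_nonneg L) hB) hfx.le,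
        mul_nonneg (show 0 ≤ 2 / α by positivity) hT]
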